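/- Prime Filter Theorem: Let M be a basic pseudo hoop, A a lattice ideal of M, and F a filter of M with F ∩ A = ∅. Then there exists a prime filter P of M containing F and disjoint from A. -/
import Mathlib


universe u

structure PseudoHoop (M : Type u) where
  mul : M → M → M
  one : M
  imp : M → M → M
  rimp : M → M → M
  mul_one : ∀ x, mul x one = x
  one_mul : ∀ x, mul one x = x
  imp_self : ∀ x, imp x x = one
  rimp_self : ∀ x, rimp x x = one
  mul_imp : ∀ x y z, imp (mul x y) z = imp x (imp y z)
  mul_rimp : ∀ x y z, rimp (mul x y) z = rimp y (rimp x z)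
  div1 : ∀ x y, mul (imp x y) x = mul (imp y x) y
  div2 : ∀ x y, mul (imp x y) x = mul x (rimp x y)
  div3 : ∀ x y, mul x (rimp x y) = mul y (rimp y x)

namespace PseudoHoop

variable {M : Type u} (H : PseudoHoop M)

/-- The induced order: x ≤ y iff x → y = 1. -/
def le (x y : M) : Prop := H.imp x y = H.one

/-- The derived meet: x ∧ y = (x → y) ⊙ x. -/
def meet (x y : M) : M := H.mul (H.imp x y) x

/-- Powers: a^0 = 1, a^(n+1) = a^n ⊙ a. -/
def pow (a : M) : ℕ → M
  | 0 => H.one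
  | n + 1 => H.mul (pow a n) a

/-- j is the least upper bound of x and y. -/
def IsJoin (x y j : M) : Prop :=
  H.le x j ∧ H.le y j ∧ ∀ c, H.le x c → H.le y c → H.le j c

/-- Prelinearity: (x→y) ∨ (y→x) and (x⇝y) ∨ (y⇝x) exist and equal 1. -/
def Prelinear : Prop :=
  ∀ x y, H.IsJoin (H.imp x y) (H.imp y x) H.one ∧ H.IsJoin (H.rimp x y) (H.rimp y x) H.one

/-- Basic pseudo hoop. -/
def Basic : Prop :=
  (∀ x y z, H.le (H.imp (H.imp x y) z) (H.imp (H.imp (H.imp y x) z) z)) ∧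
  (∀ x y z, H.le (H.rimp (H.rimp x y) z) (H.rimp (H.rimp (H.rimp y x) z) z))

/-- Filters: contain 1, closed under ⊙ and upward closed. -/
def IsFilter (F : Set M) : Prop :=
  H.one ∈ F ∧ (∀ x ∈ F, ∀ y ∈ F, H.mul x y ∈ F) ∧ (∀ x ∈ F, ∀ y, H.le x y → y ∈ F)

/-- Filter generated by a set. -/
def filterGen (S : Set M) : Set M := ⋂₀ {F | H.IsFilter F ∧ S ⊆ F}

/-- Prime filter. -/
def IsPrime (F : Set M) : Prop :=
  H.IsFilter F ∧
    ∀ F₁ F₂, H.IsFilter F₁ → H.IsFilter F₂ → F₁ ∩ F₂ ⊆ F → F₁ ⊆ F ∨ F₂ ⊆ F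

/-- V is a value of g: a filter maximal with respect to not containing g. -/
def IsValueOf (V : Set M) (g : M) : Prop :=
  H.IsFilter V ∧ g ∉ V ∧ ∀ W, H.IsFilter W → V ⊆ W → g ∉ W → W = V

/-- V is a value of M: a value of some g ≠ 1. -/
def IsValue (V : Set M) : Prop := ∃ g, g ≠ H.one ∧ H.IsValueOf V g

end PseudoHoop

namespace PseudoHoop

variable {M : Type u} (H : PseudoHoop M)

lemma le_antisymm' {a b : M} (h1 : H.le a b) (h2 : H.le b a) : a = b := by
  have h1' : H.imp a b = H.one := h1
  have h2' : H.imp b a = H.one := h2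
  have h := H.div1 a b
  rw [h1', h2', H.one_mul, H.one_mul] at h
  exact h

lemma le_refl' (x : M) : H.le x x := H.imp_self x

lemma one_imp (x : M) : H.imp H.one x = x := by
  apply H.le_antisymm'
  · have h := H.mul_imp (H.imp H.one x) H.one x
    rw [H.mul_one] at h
    rw [H.imp_self] at h
    exact h
  · show H.imp x (H.imp H.one x) = H.one
    rw [← H.mul_imp, H.mul_one, H.imp_self]

lemma imp_one (x : M) : H.imp x H.one = H.one := by
  have hx : H.mul (H.imp x H.one) x = x := by
    rw [H.div1, H.mul_one, H.one_imp]
  have h := H.mul_imp (H.imp x H.one) x H.one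
  rw [hx, H.imp_self] at h
  exact h

lemma rimp_one (x : M) : H.rimp x H.one = H.one := by
  have hx : H.mul x (H.rimp x H.one) = x := by
    rw [← H.div2, H.imp_one, H.one_mul]
  have h := H.mul_rimp x (H.rimp x H.one) H.one
  rw [hx, H.rimp_self] at h
  exact h

lemma one_rimp (x : M) : H.rimp H.one x = x := by
  have h := H.div3 x H.one
  rw [H.rimp_one, H.mul_one, H.one_mul] at h
  exact h.symm

lemma le_of_rimp {a b : M} (h : H.rimp a b = H.one) : H.le a b := by
  have hx : H.mul (H.imp a b) a = a := by rw [H.div2, h, H.mul_one]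
  have h2 := H.mul_imp (H.imp a b) a b
  rw [hx, H.imp_self] at h2
  exact h2

lemma rimp_of_le {a b : M} (h : H.le a b) : H.rimp a b = H.one := by
  have h' : H.imp a b = H.one := h
  have hx : H.mul a (H.rimp a b) = a := by rw [← H.div2, h', H.one_mul]
  have h2 := H.mul_rimp a (H.rimp a b) b
  rw [hx, H.rimp_self] at h2
  exact h2

lemma eq_mul_of_le {a b : M} (h : H.le a b) : a = H.mul (H.imp b a) b := by
  have h' : H.imp a b = H.one := h
  have h2 := H.div1 a b
  rw [h', H.one_mul] at h2
  exact h2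

lemma le_trans' {a b c : M} (h1 : H.le a b) (h2 : H.le b c) : H.le a c := by
  have h2' : H.imp b c = H.one := h2
  have ha := H.eq_mul_of_le h1
  show H.imp a c = H.one
  rw [ha, H.mul_imp, h2', H.imp_one]

lemma mul_le_right (x y : M) : H.le (H.mul x y) y := by
  show H.imp (H.mul x y) y = H.one
  rw [H.mul_imp, H.imp_self, H.imp_one]

lemma mul_le_left (x y : M) : H.le (H.mul x y) x := by
  apply H.le_of_rimp
  rw [H.mul_rimp, H.rimp_self, H.rimp_one]

lemma mul_assoc' (x y z : M) : H.mul (H.mul x y) z = H.mul x (H.mul y z) := by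
  have key : ∀ w, H.imp (H.mul (H.mul x y) z) w = H.imp (H.mul x (H.mul y z)) w := by
    intro w
    rw [H.mul_imp, H.mul_imp, H.mul_imp, H.mul_imp]
  apply H.le_antisymm'
  · show H.imp _ _ = H.one
    rw [key, H.imp_self]
  · show H.imp _ _ = H.one
    rw [← key, H.imp_self]

lemma le_imp_iff {x y z : M} : H.le x (H.imp y z) ↔ H.le (H.mul x y) z := by
  show H.imp x (H.imp y z) = H.one ↔ H.imp (H.mul x y) z = H.one
  rw [H.mul_imp]

lemma le_rimp_iff {x y z : M} : H.le x (H.rimp y z) ↔ H.le (H.mul y x) z := by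
  constructor
  · intro h
    apply H.le_of_rimp
    rw [H.mul_rimp]
    exact H.rimp_of_le h
  · intro h
    apply H.le_of_rimp
    have h2 := H.rimp_of_le h
    rw [H.mul_rimp] at h2
    exact h2

lemma imp_le_imp {a b c : M} (h : H.le b c) : H.le (H.imp a b) (H.imp a c) := by
  rw [H.le_imp_iff]
  exact H.le_trans' (H.le_imp_iff.mp (H.le_refl' _)) h

lemma mul_le_mul_right {a b : M} (c : M) (h : H.le a b) : H.le (H.mul a c) (H.mul b c) := by
  apply H.le_imp_iff.mp
  exact H.le_trans' h (H.le_imp_iff.mpr (H.le_refl' (H.mul b c)))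

lemma mul_le_mul_left {a b : M} (c : M) (h : H.le a b) : H.le (H.mul c a) (H.mul c b) := by
  apply H.le_rimp_iff.mp
  exact H.le_trans' h (H.le_rimp_iff.mpr (H.le_refl' (H.mul c b)))

lemma meet_le_left (x y : M) : H.le (H.meet x y) x := H.mul_le_right _ _

lemma meet_le_right (x y : M) : H.le (H.meet x y) y := by
  show H.le (H.mul (H.imp x y) x) y
  exact H.le_imp_iff.mp (H.le_refl' _)

lemma le_meet {x y c : M} (h1 : H.le c x) (h2 : H.le c y) : H.le c (H.meet x y) := by
  have hc := H.eq_mul_of_le h2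
  have h4 : H.le (H.mul (H.imp y c) y) (H.mul (H.imp y x) y) :=
    H.mul_le_mul_right y (H.imp_le_imp h1)
  rw [← hc] at h4
  rw [← H.div1] at h4
  exact h4

lemma left_le_ub (f g : M) : H.le f (H.rimp (H.imp f g) g) :=
  H.le_rimp_iff.mpr (H.le_imp_iff.mp (H.le_refl' _))

lemma right_le_ub (f g : M) : H.le g (H.rimp (H.imp f g) g) :=
  H.le_rimp_iff.mpr (H.mul_le_right _ _)

lemma mul_rimp_le (x y : M) : H.le (H.mul x (H.rimp x y)) y := by
  rw [H.div3]
  exact H.mul_le_left _ _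

lemma prelin (hB : H.Basic) {a b w : M} (h1 : H.le (H.imp a b) w)
    (h2 : H.le (H.imp b a) w) : w = H.one := by
  have h := hB.1 a b w
  have h1' : H.imp (H.imp a b) w = H.one := h1
  have h2' : H.imp (H.imp b a) w = H.one := h2
  rw [h1', h2'] at h
  have h3 : H.imp H.one (H.imp H.one w) = H.one := h
  rw [H.one_imp, H.one_imp] at h3
  exact h3

def join (x y : M) : M := H.meet (H.rimp (H.imp x y) y) (H.rimp (H.imp y x) x)

lemma le_join_left (x y : M) : H.le x (H.join x y) :=
  H.le_meet (H.left_le_ub x y) (H.right_le_ub y x)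

lemma le_join_right (x y : M) : H.le y (H.join x y) :=
  H.le_meet (H.right_le_ub x y) (H.left_le_ub y x)

lemma join_le (hB : H.Basic) {x y c : M} (hx : H.le x c) (hy : H.le y c) :
    H.le (H.join x y) c := by
  have h1 : H.le (H.imp x y) (H.imp (H.join x y) c) := by
    apply H.le_imp_iff.mpr
    have h : H.le (H.mul (H.imp x y) (H.join x y))
        (H.mul (H.imp x y) (H.rimp (H.imp x y) y)) :=
      H.mul_le_mul_left _ (H.meet_le_left _ _)
    exact H.le_trans' (H.le_trans' h (H.mul_rimp_le _ _)) hy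
  have h2 : H.le (H.imp y x) (H.imp (H.join x y) c) := by
    apply H.le_imp_iff.mpr
    have h : H.le (H.mul (H.imp y x) (H.join x y))
        (H.mul (H.imp y x) (H.rimp (H.imp y x) x)) :=
      H.mul_le_mul_left _ (H.meet_le_right _ _)
    exact H.le_trans' (H.le_trans' h (H.mul_rimp_le _ _)) hx
  exact H.prelin hB h1 h2

lemma isJoin_join (hB : H.Basic) (x y : M) : H.IsJoin x y (H.join x y) :=
  ⟨H.le_join_left x y, H.le_join_right x y, fun _ hx hy => H.join_le hB hx hy⟩

lemma join_comm_le (hB : H.Basic) (x y : M) : H.le (H.join x y) (H.join y x) :=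
  H.join_le hB (H.le_join_right y x) (H.le_join_left y x)

lemma subdist (hB : H.Basic) (g h k : M) :
    H.le (H.mul (H.join g h) (H.join g k)) (H.join g (H.mul h k)) := by
  have hk : H.le (H.join g k) (H.rimp h (H.join g (H.mul h k))) := by
    apply H.join_le hB
    · exact H.le_rimp_iff.mpr (H.le_trans' (H.mul_le_right h g) (H.le_join_left _ _))
    · exact H.le_rimp_iff.mpr (H.le_join_right _ _)
  apply H.le_imp_iff.mp
  apply H.join_le hB
  · apply H.le_imp_iff.mpr
    exact H.le_trans' (H.mul_le_left _ _) (H.le_join_left _ _)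
  · exact H.le_imp_iff.mpr (H.le_rimp_iff.mp hk)

def prodL (l : List M) : M := l.foldr H.mul H.one

lemma prodL_nil : H.prodL ([] : List M) = H.one := rfl

lemma prodL_cons (a : M) (l : List M) : H.prodL (a :: l) = H.mul a (H.prodL l) := rfl

lemma prodL_append (l₁ l₂ : List M) :
    H.prodL (l₁ ++ l₂) = H.mul (H.prodL l₁) (H.prodL l₂) := by
  induction l₁ with
  | nil => rw [List.nil_append, prodL_nil, H.one_mul]
  | cons a l ih => rw [List.cons_append, prodL_cons, prodL_cons, ih, H.mul_assoc']

def FG (S : Set M) : Set M :=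
  {z | ∃ l : List M, (∀ m ∈ l, m ∈ S) ∧ H.le (H.prodL l) z}

lemma subset_FG (S : Set M) : S ⊆ H.FG S := by
  intro s hs
  refine ⟨[s], ?_, ?_⟩
  · intro m hm
    rw [List.mem_singleton] at hm
    rw [hm]; exact hs
  · rw [prodL_cons, prodL_nil, H.mul_one]
    exact H.le_refl' s

lemma FG_isFilter (S : Set M) : H.IsFilter (H.FG S) := by
  refine ⟨⟨[], by simp, H.le_refl' _⟩, ?_, ?_⟩
  · rintro x ⟨l₁, hl₁, hle₁⟩ y ⟨l₂, hl₂, hle₂⟩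
    refine ⟨l₁ ++ l₂, ?_, ?_⟩
    · intro m hm
      rcases List.mem_append.mp hm with h | h
      exacts [hl₁ m h, hl₂ m h]
    · rw [H.prodL_append]
      exact H.le_trans' (H.mul_le_mul_right _ hle₁) (H.mul_le_mul_left _ hle₂)
  · rintro x ⟨l, hl, hle⟩ y hxy
    exact ⟨l, hl, H.le_trans' hle hxy⟩

lemma filter_upward {P : Set M} (hP : H.IsFilter P) {x y : M}
    (hx : x ∈ P) (h : H.le x y) : y ∈ P := hP.2.2 x hx y h

lemma filter_mul {P : Set M} (hP : H.IsFilter P) {x y : M}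
    (hx : x ∈ P) (hy : y ∈ P) : H.mul x y ∈ P := hP.2.1 x hx y hy

lemma key1 (hB : H.Basic) {P : Set M} (hP : H.IsFilter P) (s : M) :
    ∀ l : List M, (∀ t ∈ l, H.join s t ∈ P) → H.join s (H.prodL l) ∈ P := by
  intro l
  induction l with
  | nil =>
    intro _
    exact H.filter_upward hP hP.1 (H.le_join_right s (H.prodL []))
  | cons t l ih =>
    intro hmem
    have h1 : H.join s t ∈ P := hmem t (by simp)
    have h2 : H.join s (H.prodL l) ∈ P := ih (fun u hu => hmem u (by simp [hu]))
    rw [prodL_cons]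
    exact H.filter_upward hP (H.filter_mul hP h1 h2) (H.subdist hB s t (H.prodL l))

lemma key2 (hB : H.Basic) {P : Set M} (hP : H.IsFilter P) :
    ∀ l₁ l₂ : List M, (∀ a ∈ l₁, ∀ b ∈ l₂, H.join a b ∈ P) →
      H.join (H.prodL l₁) (H.prodL l₂) ∈ P := by
  intro l₁
  induction l₁ with
  | nil =>
    intro l₂ _
    exact H.filter_upward hP hP.1 (H.le_join_left (H.prodL []) (H.prodL l₂))
  | cons a l ih =>
    intro l₂ hmem
    have hsa : H.join a (H.prodL l₂) ∈ P :=
      H.key1 hB hP a l₂ (fun t ht => hmem a (by simp) t ht)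
    have h1 : H.join (H.prodL l₂) a ∈ P :=
      H.filter_upward hP hsa (H.join_comm_le hB _ _)
    have h2' : H.join (H.prodL l) (H.prodL l₂) ∈ P :=
      ih l₂ (fun u hu b hb => hmem u (by simp [hu]) b hb)
    have h2 : H.join (H.prodL l₂) (H.prodL l) ∈ P :=
      H.filter_upward hP h2' (H.join_comm_le hB _ _)
    have h4 : H.join (H.prodL l₂) (H.mul a (H.prodL l)) ∈ P :=
      H.filter_upward hP (H.filter_mul hP h1 h2) (H.subdist hB _ a (H.prodL l))
    rw [prodL_cons]
    exact H.filter_upward hP h4 (H.join_comm_le hB _ _)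

lemma prime_of_linear {P : Set M} (hP : H.IsFilter P)
    (hlin : ∀ a b : M, H.imp a b ∈ P ∨ H.imp b a ∈ P) : H.IsPrime P := by
  refine ⟨hP, ?_⟩
  intro F₁ F₂ h1 h2 hsub
  by_cases hF1 : F₁ ⊆ P
  · exact Or.inl hF1
  · right
    obtain ⟨f, hfF, hfP⟩ := Set.not_subset.mp hF1
    intro g hg
    have hu : H.rimp (H.imp f g) g ∈ P :=
      hsub ⟨H.filter_upward h1 hfF (H.left_le_ub f g),
            H.filter_upward h2 hg (H.right_le_ub f g)⟩
    have hfg : H.imp f g ∈ P := by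
      rcases hlin f g with h | h
      · exact h
      · exfalso
        have hu' : H.rimp (H.imp g f) f ∈ P :=
          hsub ⟨H.filter_upward h1 hfF (H.right_le_ub g f),
                H.filter_upward h2 hg (H.left_le_ub g f)⟩
        exact hfP (H.filter_upward hP (H.filter_mul hP h hu') (H.mul_rimp_le _ _))
    exact H.filter_upward hP (H.filter_mul hP hfg hu) (H.mul_rimp_le _ _)

end PseudoHoop


theorem basicPseudoHoop_prime_filter_theorem {M : Type u} (H : PseudoHoop M)
    (hB : H.Basic) (A F : Set M)
    (hAdown : ∀ a ∈ A, ∀ b : M, H.le b a → b ∈ A)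
    (hAjoin : ∀ a ∈ A, ∀ b ∈ A, ∀ j : M, H.IsJoin a b j → j ∈ A)
    (hF : H.IsFilter F) (hdisj : F ∩ A = ∅) :
    ∃ P : Set M, H.IsPrime P ∧ F ⊆ P ∧ P ∩ A = ∅ := by
  classical
  set S : Set (Set M) := {Q | H.IsFilter Q ∧ F ⊆ Q ∧ ∀ z ∈ Q, z ∉ A} with hSdef
  have hFS : F ∈ S := by
    refine ⟨hF, subset_rfl, fun z hz hzA => ?_⟩
    exact (Set.eq_empty_iff_forall_notMem.mp hdisj z) ⟨hz, hzA⟩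
  have hchain : ∀ c ⊆ S, IsChain (· ⊆ ·) c → c.Nonempty → ∃ ub ∈ S, ∀ s ∈ c, s ⊆ ub := by
    intro c hcS hch hne
    obtain ⟨Q₀, hQ₀⟩ := hne
    refine ⟨⋃₀ c, ⟨⟨?_, ?_, ?_⟩, ?_, ?_⟩, fun s hs => Set.subset_sUnion_of_mem hs⟩
    · exact ⟨Q₀, hQ₀, (hcS hQ₀).1.1⟩
    · rintro x ⟨Q₁, hQ₁, hx⟩ y ⟨Q₂, hQ₂, hy⟩
      rcases hch.total hQ₁ hQ₂ with h | h
      · exact ⟨Q₂, hQ₂, (hcS hQ₂).1.2.1 x (h hx) y hy⟩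
      · exact ⟨Q₁, hQ₁, (hcS hQ₁).1.2.1 x hx y (h hy)⟩
    · rintro x ⟨Q₁, hQ₁, hx⟩ y hxy
      exact ⟨Q₁, hQ₁, (hcS hQ₁).1.2.2 x hx y hxy⟩
    · exact subset_trans (hcS hQ₀).2.1 (Set.subset_sUnion_of_mem hQ₀)
    · rintro z ⟨Q₁, hQ₁, hz⟩
      exact (hcS hQ₁).2.2 z hz
  obtain ⟨P, hFsubP, hPmax⟩ := zorn_subset_nonempty S hchain F hFS
  obtain ⟨hPfil, hFP', hPA⟩ := hPmax.1
  have hlin : ∀ a b : M, H.imp a b ∈ P ∨ H.imp b a ∈ P := by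
    intro a b
    by_contra hcon
    push_neg at hcon
    obtain ⟨hab, hba⟩ := hcon
    have hgen : ∀ x : M, x ∉ P →
        ∃ c ∈ A, ∃ l : List M, (∀ m ∈ l, m ∈ P ∪ {x}) ∧ H.le (H.prodL l) c := by
      intro x hx
      by_contra hnc
      push_neg at hnc
      have hsub : P ⊆ H.FG (P ∪ {x}) :=
        subset_trans Set.subset_union_left (H.subset_FG _)
      have hQ : H.FG (P ∪ {x}) ∈ S := by
        refine ⟨H.FG_isFilter _, subset_trans hFP' hsub, ?_⟩
        rintro z ⟨l, hl, hle⟩ hzA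
        exact hnc z hzA l hl hle
      have hPQ := hPmax.2 hQ hsub
      exact hx (hPQ (H.subset_FG _ (Or.inr rfl)))
    obtain ⟨c₁, hc₁A, l₁, hl₁, hle₁⟩ := hgen _ hab
    obtain ⟨c₂, hc₂A, l₂, hl₂, hle₂⟩ := hgen _ hba
    have hpair : ∀ s ∈ l₁, ∀ t ∈ l₂, H.join s t ∈ P := by
      intro s hs t ht
      rcases hl₁ s hs with hsP | hsx
      · exact H.filter_upward hPfil hsP (H.le_join_left s t)
      · rcases hl₂ t ht with htP | hty
        · exact H.filter_upward hPfil htP (H.le_join_right s t)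
        · have hs1 : s = H.imp a b := hsx
          have ht1 : t = H.imp b a := hty
          rw [hs1, ht1]
          have hone : H.join (H.imp a b) (H.imp b a) = H.one :=
            H.prelin hB (H.le_join_left _ _) (H.le_join_right _ _)
          rw [hone]
          exact hPfil.1
    have hjoinP : H.join c₁ c₂ ∈ P := by
      have h0 := H.key2 hB hPfil l₁ l₂ hpair
      exact H.filter_upward hPfil h0
        (H.join_le hB (H.le_trans' hle₁ (H.le_join_left c₁ c₂))
          (H.le_trans' hle₂ (H.le_join_right c₁ c₂)))
    exact hPA _ hjoinP (hAjoin c₁ hc₁A c₂ hc₂A _ (H.isJoin_join hB c₁ c₂))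
  refine ⟨P, H.prime_of_linear hPfil hlin, hFsubP, ?_⟩
  rw [Set.eq_empty_iff_forall_notMem]
  rintro z ⟨hzP, hzA⟩
  exact hPA z hzP hzA
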